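/- arXiv:2510.24271 — 4 statements merged into one kernel-verified Lean document; each statement's English description precedes it below -/
import Mathlib

section
/- For every complex number x with |x| < 1, the Artin–Hasse-type identity holds in logarithmic form: the series ∑_{n≥1} (μ(n)/n)·log(1 − x^n) converges and equals −x, where μ is the Möbius function and log is the principal branch of the complex logarithm. Equivalently, exp(x) = ∏_{n≥1} (1 − x^n)^{−μ(n)/n}. -/
open Complex ArithmeticFunction
open scoped ArithmeticFunction.Moebius

/-!
Expanding `-log (1 - xⁿ) = ∑ₘ x^(nm) / m` turns the series into the absolutely convergent double
series `∑_{n,m} μ(n) x^(nm) / (nm)`. Grouping its terms by `k = nm` gives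
`∑ₖ (xᵏ / k) ∑_{d ∣ k} μ(d)`, and `∑_{d ∣ k} μ(d) = [k = 1]` leaves only `x`.
Exponentiating termwise gives the product form.
-/

namespace ArithmeticFunction

theorem sum_divisors_moebius {R : Type*} [Ring R] (k : ℕ) :
    ∑ d ∈ k.divisors, (μ d : R) = if k = 1 then 1 else 0 := by
  have h := coe_mul_zeta_apply (f := (μ : ArithmeticFunction R)) (x := k)
  rw [coe_moebius_mul_coe_zeta, one_apply] at h
  simpa only [intCoe_apply] using h.symm

theorem hasSum_moebius_mul_comp_mul {R : Type*} [NormedRing R] [CompleteSpace R] {a : ℕ → R}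
    (ha : a 0 = 0) (hs : Summable fun p : ℕ × ℕ => (μ p.1 : R) * a (p.1 * p.2)) :
    HasSum (fun p : ℕ × ℕ => (μ p.1 : R) * a (p.1 * p.2)) (a 1) := by
  have hfibre (k : ℕ) : ∑' p : (fun p : ℕ × ℕ => p.1 * p.2) ⁻¹' {k},
      (μ p.1.1 : R) * a (p.1.1 * p.1.2) = if k = 1 then a 1 else 0 := by
    rcases eq_or_ne k 0 with rfl | hk
    · simp [show ∀ p : (fun p : ℕ × ℕ => p.1 * p.2) ⁻¹' {0}, a (p.1.1 * p.1.2) = 0 from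
        fun p => by rw [show p.1.1 * p.1.2 = 0 from p.2, ha]]
    rw [show (fun p : ℕ × ℕ => p.1 * p.2) ⁻¹' {k} = k.divisorsAntidiagonal by ext; simp [hk],
      Finset.tsum_subtype' k.divisorsAntidiagonal fun p => (μ p.1 : R) * a (p.1 * p.2)]
    calc ∑ p ∈ k.divisorsAntidiagonal, (μ p.1 : R) * a (p.1 * p.2)
        = (∑ d ∈ k.divisors, (μ d : R)) * a k := by
          rw [Finset.sum_mul, ← Nat.sum_divisorsAntidiagonal (fun d _ => (μ d : R) * a k)]
          exact Finset.sum_congr rfl fun p hp => by rw [(Nat.mem_divisorsAntidiagonal.1 hp).1]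
      _ = if k = 1 then a 1 else 0 := by
          rw [sum_divisors_moebius]; split_ifs with h <;> simp [h]
  have h := hs.hasSum.tsum_fiberwise (fun p : ℕ × ℕ => p.1 * p.2)
  simp only [hfibre] at h
  rw [← h.unique (hasSum_ite_eq 1 (a 1))]
  exact hs.hasSum

end ArithmeticFunction

theorem pow_mul_le_sqrt_pow_mul_sqrt_pow {r : ℝ} (h₀ : 0 ≤ r) (h₁ : r ≤ 1) {n m : ℕ}
    (hn : n ≠ 0) (hm : m ≠ 0) : r ^ (n * m) ≤ √r ^ n * √r ^ m := by
  have hnm : n + m ≤ 2 * (n * m) := by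
    have := Nat.one_le_iff_ne_zero.2 hn
    have := Nat.one_le_iff_ne_zero.2 hm
    nlinarith
  calc r ^ (n * m) = √r ^ (2 * (n * m)) := by rw [pow_mul √r, Real.sq_sqrt h₀]
    _ ≤ √r ^ (n + m) := pow_le_pow_of_le_one (Real.sqrt_nonneg r) (Real.sqrt_le_one.2 h₁) hnm
    _ = √r ^ n * √r ^ m := pow_add _ _ _

theorem summable_moebius_mul_pow_div {x : ℂ} (hx : ‖x‖ < 1) :
    Summable fun p : ℕ × ℕ => (μ p.1 : ℂ) * (x ^ (p.1 * p.2) / (p.1 * p.2 : ℕ)) := by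
  have hgeo : Summable fun n : ℕ => √‖x‖ ^ n :=
    summable_geometric_of_lt_one (Real.sqrt_nonneg _)
      ((Real.sqrt_lt' one_pos).2 (by simpa using hx))
  refine .of_norm_bounded (hgeo.mul_of_nonneg hgeo (fun _ => by positivity) fun _ => by positivity)
    fun ⟨n, m⟩ => ?_
  rcases eq_or_ne n 0 with rfl | hn
  · simp
  rcases eq_or_ne m 0 with rfl | hm
  · simp
  have hμ : ‖(μ n : ℂ)‖ ≤ 1 := by
    rw [Complex.norm_intCast]; exact_mod_cast abs_moebius_le_one
  have hnm : (1 : ℝ) ≤ ‖((n * m : ℕ) : ℂ)‖ := by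
    rw [Complex.norm_natCast]; exact_mod_cast Nat.one_le_iff_ne_zero.2 (mul_ne_zero hn hm)
  calc ‖(μ n : ℂ) * (x ^ (n * m) / (n * m : ℕ))‖
      = ‖(μ n : ℂ)‖ * (‖x‖ ^ (n * m) / ‖((n * m : ℕ) : ℂ)‖) := by
        rw [norm_mul, norm_div, norm_pow]
    _ ≤ 1 * (‖x‖ ^ (n * m) / 1) := by gcongr
    _ ≤ √‖x‖ ^ n * √‖x‖ ^ m := by
        rw [one_mul, div_one]; exact pow_mul_le_sqrt_pow_mul_sqrt_pow (norm_nonneg x) hx.le hn hm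

theorem hasSum_pow_mul_div_natCast_mul {z : ℂ} (hz : ‖z‖ < 1) (n : ℕ) :
    HasSum (fun m : ℕ => z ^ (n * m) / (n * m : ℕ)) (-log (1 - z ^ n) / n) := by
  -- at `n = 0` both sides vanish, since `(0 : ℂ)⁻¹ = 0`
  rcases eq_or_ne n 0 with rfl | hn
  · simp
  have hzn : ‖z ^ n‖ < 1 := by rw [norm_pow]; exact pow_lt_one₀ (norm_nonneg z) hz hn
  have hterm (m : ℕ) : z ^ (n * m) / ((n * m : ℕ) : ℂ) = (z ^ n) ^ m / m / n := by
    push_cast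
    rw [pow_mul, div_div, mul_comm (m : ℂ)]
  simpa only [hterm] using (hasSum_taylorSeries_neg_log hzn).div_const (n : ℂ)

/-- **Artin–Hasse identity** in logarithmic form: for `‖x‖ < 1`, the series
`∑_{n≥1} (μ(n)/n) · log(1 − x^n)` converges to `−x`; equivalently,
`exp x = ∏_{n≥1} (1 − x^n)^{−μ(n)/n}`. (The `n = 0` term/factor is neutral
since `μ 0 = 0`.) -/
theorem artin_hasse_log (x : ℂ) (hx : ‖x‖ < 1) :
    HasSum (fun n : ℕ => ((moebius n : ℂ) / n) * Complex.log (1 - x ^ n)) (-x) ∧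
    Multipliable (fun n : ℕ => (1 - x ^ n) ^ (-(moebius n : ℂ) / n)) ∧
    ∏' n : ℕ, (1 - x ^ n) ^ (-(moebius n : ℂ) / n) = Complex.exp x := by
  have hlog : HasSum (fun n : ℕ => (μ n : ℂ) * (-log (1 - x ^ n) / n)) x := by
    have h := hasSum_moebius_mul_comp_mul (a := fun k : ℕ => x ^ k / k) (by simp)
      (summable_moebius_mul_pow_div hx)
    rw [pow_one, Nat.cast_one, div_one] at h
    exact h.prod_fiberwise fun n => (hasSum_pow_mul_div_natCast_mul hx n).mul_left (μ n : ℂ)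
  have hfactor (n : ℕ) :
      (1 - x ^ n) ^ (-(μ n : ℂ) / n) = exp ((μ n : ℂ) * (-log (1 - x ^ n) / n)) := by
    rcases eq_or_ne n 0 with rfl | hn
    · simp
    have hxn : ‖x ^ n‖ < 1 := by rw [norm_pow]; exact pow_lt_one₀ (norm_nonneg x) hx hn
    rw [cpow_def_of_ne_zero (sub_ne_zero.2 fun h => by simp [← h] at hxn)]
    ring_nf
  have hprod : HasProd (fun n : ℕ => (1 - x ^ n) ^ (-(μ n : ℂ) / n)) (exp x) := by
    simpa only [hfactor, Function.comp_def] using hlog.cexp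
  have hterm (n : ℕ) :
      (μ n : ℂ) / n * log (1 - x ^ n) = -((μ n : ℂ) * (-log (1 - x ^ n) / n)) := by ring
  exact ⟨by simpa only [hterm] using hlog.neg, hprod.multipliable, hprod.tprod_eq⟩
end

section
/- The derivative at s = 0 of the Dirichlet L-function of the nontrivial character modulo 4 equals L'(χ₄, 0) = log(Γ(1/4)/(2·Γ(3/4))). -/
/-!
For `Re s > 1`, grouping the L-series around the negative terms gives
`2 L(χ₄, s) - 1 = ∑ₖ ((4k+5)^(-s) - 2 (4k+3)^(-s) + (4k+1)^(-s))`. Each summand is a second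
difference of `x ↦ x^(-s)`, hence `O(k^(-Re s - 2))`, so the series converges locally uniformly
on `Re s > -1/2` and, by the identity theorem, still equals `2 L(χ₄, s) - 1` there.
Differentiating termwise at `s = 0` gives `2 L'(χ₄, 0) = ∑ₖ log ((4k+3)² / ((4k+1)(4k+5)))`, and by
Euler's limit formula for `Γ` the partial products of this Wallis-type product converge to
`Γ(1/4) Γ(5/4) / Γ(3/4)² = (Γ(1/4) / (2 Γ(3/4)))²`.
-/

open Complex

/-- The unique nontrivial Dirichlet character modulo 4, with values in `ℂ`. -/
noncomputable def chiFour : DirichletCharacter ℂ 4 :=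
  ZMod.χ₄.ringHomComp (Int.castRingHom ℂ)

open Filter Topology Set Metric Finset

lemma norm_secondDiff_le {E : Type*} [NormedAddCommGroup E] [NormedSpace ℝ E]
    {f f' f'' : ℝ → E} {x h C : ℝ} (hh : 0 ≤ h)
    (hf : ∀ u ∈ Icc x (x + 2 * h), HasDerivAt f (f' u) u)
    (hf' : ∀ u ∈ Icc x (x + 2 * h), HasDerivAt f' (f'' u) u)
    (hC : ∀ u ∈ Icc x (x + 2 * h), ‖f'' u‖ ≤ C) :
    ‖f (x + 2 * h) - f (x + h) - (f (x + h) - f x)‖ ≤ C * h ^ 2 := by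
  have hsub : ∀ u ∈ Icc x (x + h), Icc u (u + h) ⊆ Icc x (x + 2 * h) := fun u hu =>
    Icc_subset_Icc hu.1 (by linarith [hu.2])
  have hderiv : ∀ u ∈ Icc x (x + h), HasDerivWithinAt (fun v => f (v + h) - f v)
      (f' (u + h) - f' u) (Icc x (x + h)) u := fun u hu =>
    (((hf _ (hsub u hu ⟨by linarith [hu.1], le_rfl⟩)).comp_add_const u h).sub
      (hf u (hsub u hu ⟨le_rfl, by linarith⟩))).hasDerivWithinAt
  have hbound : ∀ u ∈ Icc x (x + h), ‖f' (u + h) - f' u‖ ≤ C * h := fun u hu => by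
    have := (convex_Icc u (u + h)).norm_image_sub_le_of_norm_hasDerivWithin_le
      (fun v hv => (hf' v (hsub u hu hv)).hasDerivWithinAt) (fun v hv => hC v (hsub u hu hv))
      (left_mem_Icc.2 (by linarith)) (right_mem_Icc.2 (by linarith))
    simpa [abs_of_nonneg hh] using this
  have := (convex_Icc x (x + h)).norm_image_sub_le_of_norm_hasDerivWithin_le hderiv hbound
    (left_mem_Icc.2 (by linarith)) (right_mem_Icc.2 (by linarith))
  simpa [add_assoc, ← two_mul, abs_of_nonneg hh, pow_two, mul_assoc] using this

lemma hasDerivAt_ofReal_cpow_const_of_pos {x : ℝ} (hx : 0 < x) (c : ℂ) :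
    HasDerivAt (fun y : ℝ => (y : ℂ) ^ c) (c * (x : ℂ) ^ (c - 1)) x := by
  simpa using ((hasDerivAt_id (x : ℂ)).cpow_const (ofReal_mem_slitPlane.2 hx)).comp_ofReal

lemma norm_secondDiff_ofReal_cpow_neg_le {s : ℂ} (hs : -2 ≤ s.re) {x h : ℝ} (hx : 0 < x)
    (hh : 0 ≤ h) :
    ‖((x + 2 * h : ℝ) : ℂ) ^ (-s) - ((x + h : ℝ) : ℂ) ^ (-s)
        - (((x + h : ℝ) : ℂ) ^ (-s) - (x : ℂ) ^ (-s))‖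
      ≤ ‖s‖ * ‖s + 1‖ * x ^ (-s.re - 2) * h ^ 2 := by
  refine norm_secondDiff_le (f := fun y : ℝ => (y : ℂ) ^ (-s)) hh
    (fun u hu => hasDerivAt_ofReal_cpow_const_of_pos (hx.trans_le hu.1) _)
    (fun u hu => (hasDerivAt_ofReal_cpow_const_of_pos (hx.trans_le hu.1) _).const_mul (-s))
    fun u hu => ?_
  have hu0 : 0 < u := hx.trans_le hu.1
  rw [norm_mul, norm_mul, norm_neg, norm_cpow_eq_rpow_re_of_pos hu0, mul_assoc]
  gcongr
  · rw [← neg_add', norm_neg]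
  · have hre : (-s - 1 - 1).re = -s.re - 2 := by simp only [sub_re, neg_re, one_re]; ring
    exact hre ▸ Real.rpow_le_rpow_of_nonpos hx hu.1 (by linarith)

lemma hasDerivAt_const_cpow_neg_zero {c : ℂ} (hc : c ≠ 0) :
    HasDerivAt (fun s : ℂ => c ^ (-s)) (-log c) 0 := by
  simpa using (hasDerivAt_neg (0 : ℂ)).const_cpow (Or.inl hc)

lemma GammaSeq_mul_div_eq_prod {a b c d : ℝ} (ha : 0 < a) (hb : 0 < b) (hc : 0 < c)
    (hd : 0 < d) (habcd : a + b = c + d) {n : ℕ} (hn : n ≠ 0) :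
    Real.GammaSeq c n * Real.GammaSeq d n / (Real.GammaSeq a n * Real.GammaSeq b n)
      = ∏ k ∈ range (n + 1), (a + k) * (b + k) / ((c + k) * (d + k)) := by
  have hn : (0 : ℝ) < n := by positivity
  have hpow : (n : ℝ) ^ c * (n : ℝ) ^ d = (n : ℝ) ^ a * (n : ℝ) ^ b := by
    rw [← Real.rpow_add hn, ← Real.rpow_add hn, habcd]
  have hprod : ∀ t : ℝ, 0 < t → 0 < ∏ k ∈ range (n + 1), (t + k) := fun t ht =>
    prod_pos fun k _ => by positivity
  have hA := hprod a ha
  have hB := hprod b hb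
  have hC := hprod c hc
  have hD := hprod d hd
  simp only [Real.GammaSeq, prod_div_distrib, prod_mul_distrib]
  field_simp
  rw [hpow]

lemma tendsto_prod_div_Gamma {a b c d : ℝ} (ha : 0 < a) (hb : 0 < b) (hc : 0 < c)
    (hd : 0 < d) (habcd : a + b = c + d) :
    Tendsto (fun N : ℕ => ∏ k ∈ range N, (a + k) * (b + k) / ((c + k) * (d + k))) atTop
      (𝓝 (Real.Gamma c * Real.Gamma d / (Real.Gamma a * Real.Gamma b))) := by
  have hlim := ((Real.GammaSeq_tendsto_Gamma c).mul (Real.GammaSeq_tendsto_Gamma d)).div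
    ((Real.GammaSeq_tendsto_Gamma a).mul (Real.GammaSeq_tendsto_Gamma b))
    (mul_pos (Real.Gamma_pos_of_pos ha) (Real.Gamma_pos_of_pos hb)).ne'
  refine (tendsto_add_atTop_iff_nat 1).mp (hlim.congr' ?_)
  filter_upwards [eventually_ne_atTop 0] with n hn
  exact GammaSeq_mul_div_eq_prod ha hb hc hd habcd hn

lemma chiFour_ne_one : chiFour ≠ 1 := by
  intro h
  have h3 := DFunLike.congr_fun h 3
  have hu : IsUnit (3 : ZMod 4) := by decide
  have : ZMod.χ₄ 3 = -1 := by decide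
  norm_num [chiFour, MulChar.ringHomComp_apply, MulChar.one_apply hu, this] at h3

lemma LSeries_term_chiFour (s : ℂ) (n : ℕ) :
    LSeries.term (fun n : ℕ => chiFour n) s n = ZMod.χ₄ n * (n : ℂ) ^ (-s) := by
  rcases eq_or_ne n 0 with rfl | hn
  · simp
  · simp [LSeries.term_of_ne_zero hn, chiFour, MulChar.ringHomComp_apply, cpow_neg,
      div_eq_mul_inv]

lemma LFunction_chiFour_eq_tsum_sub_tsum {s : ℂ} (hs : 1 < s.re) :
    chiFour.LFunction s = ∑' m : ℕ, (4 * m + 1 : ℂ) ^ (-s) - ∑' m : ℕ, (4 * m + 3 : ℂ) ^ (-s) := by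
  rw [DirichletCharacter.LFunction_eq_LSeries _ hs, LSeries,
    Nat.sumByResidueClasses (chiFour.LSeriesSummable_of_one_lt_re hs) 4]
  have hcast : ∀ (j : ZMod 4) (m : ℕ), ((j.val + 4 * m : ℕ) : ZMod 4) = j := by
    intro j m; simp [show (4 : ZMod 4) = 0 from rfl]
  simp only [LSeries_term_chiFour, hcast, tsum_mul_left]
  rw [show (Finset.univ : Finset (ZMod 4)) = {0, 1, 2, 3} from rfl,
    sum_insert (by decide), sum_insert (by decide), sum_insert (by decide), sum_singleton]
  have e0 : ZMod.χ₄ 0 = 0 := by decide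
  have e1 : ZMod.χ₄ 1 = 1 := by decide
  have e2 : ZMod.χ₄ 2 = 0 := by decide
  have e3 : ZMod.χ₄ 3 = -1 := by decide
  have v1 : (1 : ZMod 4).val = 1 := rfl
  have v3 : (3 : ZMod 4).val = 3 := rfl
  simp only [e0, e1, e2, e3, v1, v3]
  push_cast
  ring_nf

noncomputable def chiFourSecondDiff (k : ℕ) (s : ℂ) : ℂ :=
  (4 * k + 5 : ℂ) ^ (-s) - 2 * (4 * k + 3 : ℂ) ^ (-s) + (4 * k + 1 : ℂ) ^ (-s)

lemma differentiable_chiFourSecondDiff (k : ℕ) : Differentiable ℂ (chiFourSecondDiff k) := by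
  unfold chiFourSecondDiff
  fun_prop (disch := exact Or.inl (by norm_cast))

lemma hasSum_chiFourSecondDiff {s : ℂ} (hs : 1 < s.re) :
    HasSum (chiFourSecondDiff · s) (2 * chiFour.LFunction s - 1) := by
  have hsummable : ∀ r : ℕ, Summable (fun m : ℕ => (4 * m + r : ℂ) ^ (-s)) := fun r =>
    ((summable_one_div_nat_cpow.2 hs).comp_injective (i := fun m : ℕ => 4 * m + r)
      fun m m' h => by simp only at h; omega).congr fun m => by simp [cpow_neg]
  have h1 := (hsummable 1).hasSum
  have h3 := (hsummable 3).hasSum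
  simp only [Nat.cast_one, Nat.cast_ofNat] at h1 h3
  have h5 : HasSum (fun m : ℕ => (4 * m + 5 : ℂ) ^ (-s))
      (∑' m : ℕ, (4 * m + 1 : ℂ) ^ (-s) - 1) := by
    have := (hasSum_nat_add_iff' 1).mpr h1
    simp only [range_one, sum_singleton, Nat.cast_zero, mul_zero, zero_add, one_cpow,
      Nat.cast_add, Nat.cast_one] at this
    rwa [show (fun m : ℕ => (4 * (m + 1 : ℂ) + 1) ^ (-s)) = fun m : ℕ => (4 * m + 5 : ℂ) ^ (-s)
      from funext fun m => by ring_nf] at this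
  have hsum := (h5.sub (h3.mul_left 2)).add h1
  rwa [LFunction_chiFour_eq_tsum_sub_tsum hs, show ∀ A B : ℂ, 2 * (A - B) - 1 = A - 1 - 2 * B + A
    from fun A B => by ring]

/- `ball 1 (3 / 2)` is a connected open set inside `Re s > -1/2` containing both `0` and a point,
`2`, where the L-series converges. -/
lemma norm_chiFourSecondDiff_le {s : ℂ} (hs : s ∈ ball (1 : ℂ) (3 / 2)) (k : ℕ) :
    ‖chiFourSecondDiff k s‖ ≤ 35 * ((k : ℝ) + 1) ^ (-(3 / 2 : ℝ)) := by
  rw [mem_ball, dist_eq_norm] at hs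
  have hre : -(1 / 2 : ℝ) < s.re := by
    have := abs_lt.1 ((abs_re_le_norm (s - 1)).trans_lt hs)
    simp only [sub_re, one_re, neg_lt_sub_iff_lt_add] at this
    linarith
  have hs0 : ‖s‖ ≤ 5 / 2 := by
    have := norm_add_le (s - 1) 1
    simp only [sub_add_cancel, norm_one] at this
    linarith
  have hs1 : ‖s + 1‖ ≤ 7 / 2 := by
    have := norm_add_le (s - 1) 2; rw [show s - 1 + 2 = s + 1 by ring] at this; norm_num at this
    linarith
  have hbound := norm_secondDiff_ofReal_cpow_neg_le (by linarith) (x := 4 * k + 1) (h := 2)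
    (by positivity) (by norm_num)
  have hH : chiFourSecondDiff k s
      = ((4 * k + 1 + 2 * 2 : ℝ) : ℂ) ^ (-s) - ((4 * k + 1 + 2 : ℝ) : ℂ) ^ (-s)
        - (((4 * k + 1 + 2 : ℝ) : ℂ) ^ (-s) - ((4 * k + 1 : ℝ) : ℂ) ^ (-s)) := by
    simp only [chiFourSecondDiff]; push_cast; ring_nf
  have hk : 0 < (k : ℝ) + 1 := by positivity
  have hpow : (4 * k + 1 : ℝ) ^ (-s.re - 2) ≤ ((k : ℝ) + 1) ^ (-(3 / 2 : ℝ)) :=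
    calc (4 * k + 1 : ℝ) ^ (-s.re - 2) ≤ (4 * k + 1 : ℝ) ^ (-(3 / 2 : ℝ)) :=
          Real.rpow_le_rpow_of_exponent_le (by linarith [k.cast_nonneg (α := ℝ)]) (by linarith)
      _ ≤ ((k : ℝ) + 1) ^ (-(3 / 2 : ℝ)) :=
          Real.rpow_le_rpow_of_nonpos hk (by linarith [k.cast_nonneg (α := ℝ)]) (by norm_num)
  rw [hH]
  refine hbound.trans ?_
  calc ‖s‖ * ‖s + 1‖ * (4 * k + 1 : ℝ) ^ (-s.re - 2) * 2 ^ 2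
      ≤ 5 / 2 * (7 / 2) * ((k : ℝ) + 1) ^ (-(3 / 2 : ℝ)) * 2 ^ 2 := by gcongr
    _ = 35 * ((k : ℝ) + 1) ^ (-(3 / 2 : ℝ)) := by ring

lemma summable_chiFourSecondDiff_bound :
    Summable fun k : ℕ => 35 * ((k : ℝ) + 1) ^ (-(3 / 2 : ℝ)) := by
  refine Summable.mul_left _ ?_
  exact_mod_cast (summable_nat_add_iff 1).2
    (Real.summable_nat_rpow.2 (by norm_num : -(3 / 2 : ℝ) < -1))

lemma LFunction_chiFour_eqOn_tsum :
    EqOn (fun s => 2 * chiFour.LFunction s - 1) (fun s => ∑' k, chiFourSecondDiff k s)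
      (ball 1 (3 / 2)) := by
  have hL : AnalyticOnNhd ℂ (fun s => 2 * chiFour.LFunction s - 1) (ball 1 (3 / 2)) :=
    (((DirichletCharacter.differentiable_LFunction chiFour_ne_one).const_mul 2).sub_const
      1).differentiableOn.analyticOnNhd isOpen_ball
  have hF : AnalyticOnNhd ℂ (fun s => ∑' k, chiFourSecondDiff k s) (ball 1 (3 / 2)) :=
    (differentiableOn_tsum_of_summable_norm summable_chiFourSecondDiff_bound
      (fun k => (differentiable_chiFourSecondDiff k).differentiableOn) isOpen_ball
      fun k s hs => norm_chiFourSecondDiff_le hs k).analyticOnNhd isOpen_ball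
  refine hL.eqOn_of_preconnected_of_eventuallyEq hF (convex_ball _ _).isPreconnected
    (z₀ := 2) (by rw [mem_ball, dist_eq_norm]; norm_num) ?_
  filter_upwards [(isOpen_lt continuous_const continuous_re).mem_nhds
    (by norm_num : (1 : ℝ) < (2 : ℂ).re)] with s hs
  exact (hasSum_chiFourSecondDiff hs).tsum_eq.symm

lemma hasSum_deriv_chiFourSecondDiff_zero :
    HasSum (fun k => deriv (chiFourSecondDiff k) 0)
      (deriv (fun s => ∑' k, chiFourSecondDiff k s) 0) :=
  hasSum_deriv_of_summable_norm summable_chiFourSecondDiff_bound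
    (fun k => (differentiable_chiFourSecondDiff k).differentiableOn) isOpen_ball
    (fun k s hs => norm_chiFourSecondDiff_le hs k) (by rw [mem_ball, dist_eq_norm]; norm_num)

lemma deriv_chiFourSecondDiff_zero (k : ℕ) :
    deriv (chiFourSecondDiff k) 0
      = (2 * Real.log (4 * k + 3) - Real.log (4 * k + 1) - Real.log (4 * k + 5) : ℝ) := by
  have hderiv := ((hasDerivAt_const_cpow_neg_zero (c := 4 * k + 5) (by norm_cast)).sub
    ((hasDerivAt_const_cpow_neg_zero (c := 4 * k + 3) (by norm_cast)).const_mul 2)).add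
    (hasDerivAt_const_cpow_neg_zero (c := 4 * k + 1) (by norm_cast))
  have hH : HasDerivAt (chiFourSecondDiff k) _ 0 := hderiv
  rw [hH.deriv]
  push_cast [ofReal_log (by positivity : (0 : ℝ) ≤ 4 * k + 1),
    ofReal_log (by positivity : (0 : ℝ) ≤ 4 * k + 3),
    ofReal_log (by positivity : (0 : ℝ) ≤ 4 * k + 5)]
  ring

lemma tendsto_sum_log_chiFour :
    Tendsto (fun N : ℕ => ∑ k ∈ range N,
        (2 * Real.log (4 * k + 3) - Real.log (4 * k + 1) - Real.log (4 * k + 5))) atTop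
      (𝓝 (2 * Real.log (Real.Gamma (1 / 4) / (2 * Real.Gamma (3 / 4))))) := by
  have hprod := tendsto_prod_div_Gamma (a := 3 / 4) (b := 3 / 4) (c := 1 / 4) (d := 5 / 4)
    (by norm_num) (by norm_num) (by norm_num) (by norm_num) (by norm_num)
  have hG : Real.Gamma (1 / 4) * Real.Gamma (5 / 4) / (Real.Gamma (3 / 4) * Real.Gamma (3 / 4))
      = (Real.Gamma (1 / 4) / (2 * Real.Gamma (3 / 4))) ^ 2 := by
    rw [show (5 / 4 : ℝ) = 1 / 4 + 1 by norm_num, Real.Gamma_add_one (by norm_num)]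
    ring
  have hlog := hprod.log (by rw [hG]; positivity)
  rw [hG, Real.log_pow] at hlog
  push_cast at hlog
  refine hlog.congr fun N => ?_
  rw [Real.log_prod fun k _ => by positivity]
  refine sum_congr rfl fun k _ => ?_
  have hk : (0 : ℝ) ≤ k := k.cast_nonneg
  rw [show (3 / 4 + k : ℝ) * (3 / 4 + k) / ((1 / 4 + k) * (5 / 4 + k))
      = (4 * k + 3) ^ 2 / ((4 * k + 1) * (4 * k + 5)) by field_simp; ring,
    Real.log_div (by positivity) (by positivity), Real.log_mul (by positivity) (by positivity),
    Real.log_pow]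
  push_cast
  ring

lemma deriv_tsum_chiFourSecondDiff_zero :
    deriv (fun s => ∑' k, chiFourSecondDiff k s) 0
      = (2 * Real.log (Real.Gamma (1 / 4) / (2 * Real.Gamma (3 / 4))) : ℝ) := by
  have hsum := hasSum_deriv_chiFourSecondDiff_zero
  simp only [deriv_chiFourSecondDiff_zero] at hsum
  refine tendsto_nhds_unique hsum.tendsto_sum_nat
    (((continuous_ofReal.tendsto _).comp tendsto_sum_log_chiFour).congr fun N => ?_)
  simp only [Function.comp_apply, ofReal_sum]

/-- The derivative at `s = 0` of the Dirichlet L-function of the nontrivial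
character modulo 4 equals `log (Γ(1/4) / (2 Γ(3/4)))`. -/
theorem deriv_LFunction_chiFour_zero :
    deriv chiFour.LFunction 0
      = Real.log (Real.Gamma (1 / 4) / (2 * Real.Gamma (3 / 4))) := by
  have hzero : (0 : ℂ) ∈ ball (1 : ℂ) (3 / 2) := by rw [mem_ball, dist_eq_norm]; norm_num
  have hdiff : DifferentiableAt ℂ chiFour.LFunction 0 :=
    DirichletCharacter.differentiableAt_LFunction chiFour 0 (Or.inr chiFour_ne_one)
  have hderiv : 2 * deriv chiFour.LFunction 0 = deriv (fun s => ∑' k, chiFourSecondDiff k s) 0 := by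
    rw [← (LFunction_chiFour_eqOn_tsum.eventuallyEq_of_mem (isOpen_ball.mem_nhds hzero)).deriv_eq,
      deriv_sub_const, deriv_const_mul _ hdiff]
  rw [deriv_tsum_chiFourSecondDiff_zero] at hderiv
  push_cast at hderiv
  linear_combination hderiv / 2
end

section
/- For every complex number s with Re s > 1, L(χ₄, s) = ζ_{4,1}(s)·ζ_{4,3}(2s)/ζ_{4,3}(s), where ζ_{4,1}(s) = ∏_{p prime, p ≡ 1 (mod 4)} (1 − p^{−s})^{−1} and ζ_{4,3}(s) = ∏_{p prime, p ≡ 3 (mod 4)} (1 − p^{−s})^{−1}, all products converging for Re s > 1. -/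
open Complex

/-- The partial Euler factor over primes `p ≡ 1 (mod 4)`:
`ζ_{4,1}(s) = ∏_{p ≡ 1 mod 4} (1 − p^{−s})⁻¹`. -/
noncomputable def zetaFourOne (s : ℂ) : ℂ :=
  ∏' p : {p : ℕ // p.Prime ∧ p % 4 = 1}, (1 - (p : ℂ) ^ (-s))⁻¹

/-- The partial Euler factor over primes `p ≡ 3 (mod 4)`:
`ζ_{4,3}(s) = ∏_{p ≡ 3 mod 4} (1 − p^{−s})⁻¹`. -/
noncomputable def zetaFourThree (s : ℂ) : ℂ :=
  ∏' p : {p : ℕ // p.Prime ∧ p % 4 = 3}, (1 - (p : ℂ) ^ (-s))⁻¹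

/-!
Starting from the Euler product `L(χ₄, s) = ∏_p (1 - χ₄(p) p^{-s})⁻¹`, the prime `2` contributes
nothing, the primes `p ≡ 1 (mod 4)` contribute `ζ_{4,1}(s)`, and for `p ≡ 3 (mod 4)` the factor is
`(1 + p^{-s})⁻¹ = (1 - p^{-2s})⁻¹ (1 - p^{-s})`. All products converge, and `ζ_{4,3}(s) ≠ 0`,
because `∑ p^{-s}` converges absolutely with terms of norm `< 1`.
-/

lemma inv_one_sub_sq_mul_one_sub {R : Type*} [Field R] {x : R} (hx : x ≠ 1) :
    (1 - x ^ 2)⁻¹ * (1 - x) = (1 + x)⁻¹ := by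
  rw [show 1 - x ^ 2 = (1 - x) * (1 + x) by ring, mul_inv, mul_comm, ← mul_assoc,
    mul_inv_cancel₀ (sub_ne_zero.mpr hx.symm), one_mul]

section NormedField

variable {ι R : Type*} [NormedField R] [CompleteSpace R] {f : ι → R}

lemma multipliable_one_sub (hf : Summable (‖f ·‖)) : Multipliable fun i ↦ 1 - f i := by
  simpa [sub_eq_add_neg] using multipliable_one_add_of_summable (f := (-f ·)) (by simpa using hf)

lemma tprod_one_sub_ne_zero (hf : Summable (‖f ·‖)) (hf1 : ∀ i, ‖f i‖ < 1) :
    ∏' i, (1 - f i) ≠ 0 := by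
  have hne (i : ι) : 1 + -f i ≠ 0 := fun h ↦ by
    simpa [show f i = 1 by linear_combination -h] using hf1 i
  simpa [sub_eq_add_neg] using tprod_one_add_ne_zero_of_summable hne (by simpa using hf)

lemma multipliable_inv_one_sub (hf : Summable (‖f ·‖)) (hf1 : ∀ i, ‖f i‖ < 1) :
    Multipliable fun i ↦ (1 - f i)⁻¹ :=
  (multipliable_one_sub hf).inv₀ (tprod_one_sub_ne_zero hf hf1)

lemma hasProd_inv_one_add (hf : Summable (‖f ·‖)) (hf1 : ∀ i, ‖f i‖ < 1) :
    HasProd (fun i ↦ (1 + f i)⁻¹) ((∏' i, (1 - f i ^ 2)⁻¹) / ∏' i, (1 - f i)⁻¹) := by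
  have hsq_le (i : ι) : ‖f i ^ 2‖ ≤ ‖f i‖ := by
    rw [norm_pow]; exact pow_le_of_le_one (norm_nonneg _) (hf1 i).le two_ne_zero
  have hsq : Summable (‖f · ^ 2‖) := hf.of_nonneg_of_le (fun _ ↦ norm_nonneg _) hsq_le
  have hsq1 (i : ι) : ‖f i ^ 2‖ < 1 := (hsq_le i).trans_lt (hf1 i)
  have hprod := (multipliable_inv_one_sub hsq hsq1).hasProd.mul (multipliable_one_sub hf).hasProd
  rw [(multipliable_one_sub hf).tprod_inv₀ (tprod_one_sub_ne_zero hf hf1), div_inv_eq_mul]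
  refine hprod.congr_fun fun i ↦ (inv_one_sub_sq_mul_one_sub fun h ↦ ?_).symm
  simpa [h] using hf1 i

end NormedField

lemma norm_natCast_cpow_neg_lt_one {n : ℕ} (hn : 1 < n) {s : ℂ} (hs : 0 < s.re) :
    ‖(n : ℂ) ^ (-s)‖ < 1 := by
  rw [norm_natCast_cpow_of_pos (by omega)]
  exact Real.rpow_lt_one_of_one_lt_of_neg (by exact_mod_cast hn) (by simpa using hs)

lemma summable_norm_natCast_cpow_neg {P : ℕ → Prop} {s : ℂ} (hs : 1 < s.re) :
    Summable fun n : {n : ℕ // P n} ↦ ‖(n : ℂ) ^ (-s)‖ := by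
  have hre : (-s).re ≠ 0 := by rw [neg_re]; linarith
  simp_rw [norm_natCast_cpow_of_re_ne_zero _ hre]
  exact (Real.summable_nat_rpow.mpr (by simpa using hs)).comp_injective Subtype.val_injective

lemma cpow_neg_two_mul (x s : ℂ) : x ^ (-(2 * s)) = (x ^ (-s)) ^ 2 := by
  rw [← mul_neg, cpow_ofNat_mul]

section Subtype

variable {P : ℕ → Prop} {s : ℂ}

lemma multipliable_inv_one_sub_natCast_cpow_neg (hP : ∀ n, P n → 1 < n) (hs : 1 < s.re) :
    Multipliable fun n : {n : ℕ // P n} ↦ (1 - (n : ℂ) ^ (-s))⁻¹ :=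
  multipliable_inv_one_sub (summable_norm_natCast_cpow_neg hs)
    fun n ↦ norm_natCast_cpow_neg_lt_one (hP n n.2) (by linarith)

lemma hasProd_inv_one_add_natCast_cpow_neg (hP : ∀ n, P n → 1 < n) (hs : 1 < s.re) :
    HasProd (fun n : {n : ℕ // P n} ↦ (1 + (n : ℂ) ^ (-s))⁻¹)
      ((∏' n : {n : ℕ // P n}, (1 - (n : ℂ) ^ (-(2 * s)))⁻¹) /
        ∏' n : {n : ℕ // P n}, (1 - (n : ℂ) ^ (-s))⁻¹) := by
  simp_rw [cpow_neg_two_mul]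
  exact hasProd_inv_one_add (summable_norm_natCast_cpow_neg hs)
    fun n ↦ norm_natCast_cpow_neg_lt_one (hP n n.2) (by linarith)

end Subtype

lemma chiFour_natCast_of_mod_four_eq_one {n : ℕ} (hn : n % 4 = 1) : chiFour n = 1 := by
  simp [chiFour, MulChar.ringHomComp_apply, ZMod.χ₄_nat_one_mod_four hn]

lemma chiFour_natCast_of_mod_four_eq_three {n : ℕ} (hn : n % 4 = 3) : chiFour n = -1 := by
  simp [chiFour, MulChar.ringHomComp_apply, ZMod.χ₄_nat_three_mod_four hn]

lemma chiFour_two : chiFour 2 = 0 := by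
  simp [chiFour, MulChar.ringHomComp_apply]

section Primes

variable {M : Type*} [CommMonoid M] [TopologicalSpace M] {f : Nat.Primes → M}

lemma Nat.Primes.hasProd_subtype_iff {P : ℕ → Prop} {a : M} :
    HasProd (fun p : {p : ℕ // p.Prime ∧ P p} ↦ f ⟨p, p.2.1⟩) a ↔
      HasProd (f ∘ (↑) : {p : Nat.Primes | P p} → M) a :=
  let e : {p : ℕ // p.Prime ∧ P p} ≃ {p : Nat.Primes | P p} :=
    ⟨fun p ↦ ⟨⟨p, p.2.1⟩, p.2.2⟩, fun p ↦ ⟨p, p.1.2, p.2⟩, fun _ ↦ rfl, fun _ ↦ rfl⟩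
  e.hasProd_iff (f := (f ∘ (↑) : {p : Nat.Primes | P p} → M))

lemma Nat.Primes.hasProd_of_mod_four [ContinuousMul M] {a b : M}
    (h1 : HasProd (fun p : {p : ℕ // p.Prime ∧ p % 4 = 1} ↦ f ⟨p, p.2.1⟩) a)
    (h3 : HasProd (fun p : {p : ℕ // p.Prime ∧ p % 4 = 3} ↦ f ⟨p, p.2.1⟩) b)
    (h2 : f ⟨2, Nat.prime_two⟩ = 1) : HasProd f (a * b) := by
  have hdisj : Disjoint {p : Nat.Primes | (p : ℕ) % 4 = 1} {p : Nat.Primes | (p : ℕ) % 4 = 3} :=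
    Set.disjoint_left.mpr fun p (h1 : _ = 1) (h3 : _ = 3) ↦ by omega
  have hrest : HasProd (f ∘ (↑) : (({p : Nat.Primes | (p : ℕ) % 4 = 1} ∪
      {p : Nat.Primes | (p : ℕ) % 4 = 3})ᶜ : Set Nat.Primes) → M) 1 := by
    refine hasProd_one.congr_fun fun ⟨p, hp⟩ ↦ ?_
    simp only [Set.mem_compl_iff, Set.mem_union, Set.mem_ofPred_eq, not_or] at hp
    have hp2 : p = ⟨2, Nat.prime_two⟩ :=
      Subtype.ext <| p.2.even_iff.mp <| Nat.even_iff.mpr (by omega)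
    simp [hp2, h2]
  simpa using ((Nat.Primes.hasProd_subtype_iff.mp h1).mul_disjoint hdisj
    (Nat.Primes.hasProd_subtype_iff.mp h3)).mul_compl hrest

end Primes

/-- For `Re s > 1`, `L(χ₄, s) = ζ_{4,1}(s) ζ_{4,3}(2s) / ζ_{4,3}(s)`, all the
defining Euler products converging for `Re s > 1`. -/
theorem LFunction_chiFour_eq_partial_euler_products (s : ℂ) (hs : 1 < s.re) :
    Multipliable (fun p : {p : ℕ // p.Prime ∧ p % 4 = 1} => (1 - (p : ℂ) ^ (-s))⁻¹) ∧
    Multipliable (fun p : {p : ℕ // p.Prime ∧ p % 4 = 3} => (1 - (p : ℂ) ^ (-s))⁻¹) ∧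
    Multipliable (fun p : {p : ℕ // p.Prime ∧ p % 4 = 3} => (1 - (p : ℂ) ^ (-(2 * s)))⁻¹) ∧
    chiFour.LFunction s = zetaFourOne s * zetaFourThree (2 * s) / zetaFourThree s := by
  have hs2 : 1 < (2 * s).re := by
    simp only [mul_re, re_ofNat, im_ofNat, zero_mul, sub_zero]; linarith
  have hP (r : ℕ) (n : ℕ) (hn : n.Prime ∧ n % 4 = r) : 1 < n := hn.1.one_lt
  have h1 := multipliable_inv_one_sub_natCast_cpow_neg (hP 1) hs
  refine ⟨h1, multipliable_inv_one_sub_natCast_cpow_neg (hP 3) hs,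
    multipliable_inv_one_sub_natCast_cpow_neg (hP 3) hs2, ?_⟩
  rw [chiFour.LFunction_eq_LSeries hs, mul_div_assoc]
  refine (chiFour.LSeries_eulerProduct_hasProd hs).unique
    (Nat.Primes.hasProd_of_mod_four ?_ ?_ (by simp [chiFour_two]))
  · refine h1.hasProd.congr_fun fun p ↦ ?_
    simp [chiFour_natCast_of_mod_four_eq_one p.2.2]
  · refine (hasProd_inv_one_add_natCast_cpow_neg (hP 3) hs).congr_fun fun p ↦ ?_
    simp [chiFour_natCast_of_mod_four_eq_three p.2.2]
end

section
/- The Dirichlet L-function of the nontrivial character modulo 3 satisfies L(χ₃, 0) = 1/3 and its derivative at s = 0 equals L'(χ₃, 0) = log(Γ(1/3)/(3^{1/3}·Γ(2/3))). -/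
open Complex

/-- The unique nontrivial Dirichlet character modulo 3, with values in `ℂ`
(the quadratic residue character mod 3). -/
noncomputable def chiThree : DirichletCharacter ℂ 3 :=
  (quadraticChar (ZMod 3)).ringHomComp (Int.castRingHom ℂ)

namespace ChiThreeAux

/-- Double partial sums of `χ₃ - 1/3`, period 3 : `2/3, 1/3, 0`. -/
noncomputable def c (n : ℕ) : ℝ :=
  if n % 3 = 1 then 2/3 else if n % 3 = 2 then 1/3 else 0

lemma c_zero : c 0 = 0 := by simp [c]
lemma c_abs_le (n : ℕ) : |c n| ≤ 1 := by
  unfold c; split_ifs <;> rw [abs_le] <;> constructor <;> norm_num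

lemma c_period (n : ℕ) : c (n + 3) = c n := by
  unfold c
  have : (n + 3) % 3 = n % 3 := by omega
  rw [this]

/-- The summand of the doubly-Abel-summed Dirichlet series. -/
noncomputable def F (n : ℕ) (s : ℂ) : ℂ :=
  (c (n+1) : ℂ) * (((n+1 : ℕ) : ℂ) ^ (-s) - 2 * ((n+2 : ℕ) : ℂ) ^ (-s)
    + ((n+3 : ℕ) : ℂ) ^ (-s))

lemma F_differentiable (n : ℕ) : Differentiable ℂ (F n) := by
  have h : ∀ m : ℕ, Differentiable ℂ (fun s : ℂ => ((m+1 : ℕ) : ℂ) ^ (-s)) := by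
    intro m s
    exact DifferentiableAt.const_cpow (differentiable_id.neg s)
      (Or.inl (by exact_mod_cast Nat.succ_ne_zero m))
  exact (((h n).sub ((h (n+1)).const_mul 2)).add (h (n+2))).const_mul _

lemma F_zero (n : ℕ) : F n 0 = 0 := by
  simp [F]
  norm_num

lemma logNat (m : ℕ) :
    Complex.log ((m+1 : ℕ) : ℂ) = ((Real.log ((m : ℝ) + 1) : ℝ) : ℂ) := by
  rw [show ((m+1 : ℕ) : ℂ) = (((m : ℝ) + 1 : ℝ) : ℂ) by push_cast; ring,
    ← Complex.ofReal_log (by positivity)]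

/-- The real sequence whose sum gives `L'(χ₃,0)`. -/
noncomputable def r (n : ℕ) : ℝ :=
  c (n+1) * (-(Real.log ((n : ℝ) + 1)) + 2 * Real.log ((n : ℝ) + 2)
    - Real.log ((n : ℝ) + 3))

lemma F_deriv (n : ℕ) : deriv (F n) 0 = (r n : ℂ) := by
  have h : ∀ m : ℕ, HasDerivAt (fun s : ℂ => ((m+1 : ℕ) : ℂ) ^ (-s))
      (-((Real.log ((m : ℝ) + 1) : ℝ) : ℂ)) 0 := by
    intro m
    have h0 : ((m+1 : ℕ) : ℂ) ≠ 0 := by exact_mod_cast Nat.succ_ne_zero m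
    have := (hasDerivAt_neg (0 : ℂ)).const_cpow (c := ((m+1 : ℕ) : ℂ)) (Or.inl h0)
    rw [← logNat]
    simpa using this
  have h1 := h n
  have h2 := h (n+1)
  have h3 := h (n+2)
  have hd := (((h1.sub (h2.const_mul 2)).add h3).const_mul ((c (n+1) : ℝ) : ℂ))
  have hF : HasDerivAt (F n) (((c (n+1) : ℝ) : ℂ) * (-((Real.log ((n : ℝ) + 1) : ℝ) : ℂ)
      - 2 * (-((Real.log (((n+1 : ℕ) : ℝ) + 1) : ℝ) : ℂ))
      + -((Real.log (((n+2 : ℕ) : ℝ) + 1) : ℝ) : ℂ))) 0 := by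
    exact hd
  rw [hF.deriv, r]
  push_cast
  ring_nf

/-- Mean value bound for differences of `x ^ w` along the positive reals. -/
lemma diff_cpow_le {w : ℂ} (hw : w.re ≤ 1) {a : ℝ} (ha : 1 ≤ a) :
    ‖((a + 1 : ℝ) : ℂ) ^ w - ((a : ℝ) : ℂ) ^ w‖ ≤ ‖w‖ * a ^ (w.re - 1) := by
  have key := Convex.norm_image_sub_le_of_norm_hasDerivWithin_le
    (f := fun x : ℝ => ((x : ℝ) : ℂ) ^ w) (f' := fun x : ℝ => w * ((x : ℝ) : ℂ) ^ (w - 1))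
    (s := Set.Icc a (a + 1)) (x := a) (y := a + 1) (C := ‖w‖ * a ^ (w.re - 1))
    ?_ ?_ (convex_Icc _ _) (Set.left_mem_Icc.2 (by linarith))
    (Set.right_mem_Icc.2 (by linarith))
  · simpa using key
  · intro x hx
    have hx0 : 0 < x := by have := hx.1; linarith
    exact ((Complex.hasStrictDerivAt_cpow_const
      (Complex.ofReal_mem_slitPlane.2 hx0)).hasDerivAt.comp_ofReal).hasDerivWithinAt
  · intro x hx
    have hx0 : 0 < x := by have := hx.1; linarith
    rw [norm_mul]
    have h1 : ‖((x : ℝ) : ℂ) ^ (w - 1)‖ = x ^ (w.re - 1) := by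
      rw [Complex.norm_cpow_eq_rpow_re_of_pos hx0, Complex.sub_re,
        Complex.one_re]
    rw [h1]
    have h2 : x ^ (w.re - 1) ≤ a ^ (w.re - 1) :=
      Real.rpow_le_rpow_of_nonpos (by linarith) hx.1 (by linarith)
    have := mul_le_mul_of_nonneg_left h2 (norm_nonneg w)
    linarith

/-- Uniform bound for `F n` on the ball of radius `5/2` around `2`. -/
lemma F_bound (n : ℕ) {s : ℂ} (hs : s ∈ Metric.ball (2 : ℂ) (5/2)) :
    ‖F n s‖ ≤ 25 * ((n : ℝ) + 1) ^ (-(3/2) : ℝ) := by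
  rw [Metric.mem_ball, dist_eq_norm] at hs
  have hre : -(1/2) < s.re := by
    have h1 : |(s - 2).re| ≤ ‖s - 2‖ := Complex.abs_re_le_norm _
    have : (s - 2).re = s.re - 2 := by simp
    rw [this] at h1
    have := abs_le.1 h1
    linarith [this.1]
  have hsn : ‖s‖ ≤ 9/2 := by
    calc ‖s‖ = ‖(s - 2) + 2‖ := by ring_nf
    _ ≤ ‖s - 2‖ + ‖(2 : ℂ)‖ := norm_add_le _ _
    _ ≤ 9/2 := by norm_num; linarith
  have hs1n : ‖s + 1‖ ≤ 11/2 := by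
    calc ‖s + 1‖ = ‖(s - 2) + 3‖ := by ring_nf
    _ ≤ ‖s - 2‖ + ‖(3 : ℂ)‖ := norm_add_le _ _
    _ ≤ 11/2 := by norm_num; linarith
  -- the inner function h and its derivative bound
  set b : ℝ := (n : ℝ) + 1 with hb
  have hb1 : (1 : ℝ) ≤ b := by
    have : (0:ℝ) ≤ (n:ℝ) := Nat.cast_nonneg n
    simp only [hb]; linarith
  have hderiv : ∀ x ∈ Set.Icc b (b + 1),
      HasDerivWithinAt (fun x : ℝ => ((x + 1 : ℝ) : ℂ) ^ (-s) - ((x : ℝ) : ℂ) ^ (-s))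
        ((-s) * ((x + 1 : ℝ) : ℂ) ^ (-s - 1) - (-s) * ((x : ℝ) : ℂ) ^ (-s - 1))
        (Set.Icc b (b + 1)) x := by
    intro x hx
    have hx0 : 0 < x := by have := hx.1; linarith
    have hA : HasDerivAt (fun x : ℝ => ((x : ℝ) : ℂ) ^ (-s)) ((-s) * ((x : ℝ) : ℂ) ^ (-s - 1)) x :=
      (Complex.hasStrictDerivAt_cpow_const
        (Complex.ofReal_mem_slitPlane.2 hx0)).hasDerivAt.comp_ofReal
    have hB : HasDerivAt (fun x : ℝ => ((x + 1 : ℝ) : ℂ) ^ (-s))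
        ((-s) * ((x + 1 : ℝ) : ℂ) ^ (-s - 1)) x := by
      have hmem : ((x : ℂ) + 1) ∈ Complex.slitPlane := by
        rw [show ((x : ℂ) + 1) = (((x + 1 : ℝ)) : ℂ) by push_cast; ring]
        exact Complex.ofReal_mem_slitPlane.2 (by linarith)
      have hf : HasDerivAt (fun z : ℂ => z + 1) 1 (x : ℂ) := (hasDerivAt_id _).add_const 1
      have hg := hf.cpow_const (c := -s) hmem
      have := hg.comp_ofReal
      rw [show (((x + 1 : ℝ)) : ℂ) = ((x : ℂ) + 1) by push_cast; ring]
      simpa [Complex.ofReal_add] using this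
    exact (hB.sub hA).hasDerivWithinAt
  have hbound : ∀ x ∈ Set.Icc b (b + 1),
      ‖(-s) * ((x + 1 : ℝ) : ℂ) ^ (-s - 1) - (-s) * ((x : ℝ) : ℂ) ^ (-s - 1)‖
        ≤ 99/4 * b ^ (-(3/2) : ℝ) := by
    intro x hx
    have hx1 : (1 : ℝ) ≤ x := le_trans hb1 hx.1
    have hdiff := diff_cpow_le (w := -s - 1) (by simp; linarith) hx1
    calc ‖(-s) * ((x + 1 : ℝ) : ℂ) ^ (-s - 1) - (-s) * ((x : ℝ) : ℂ) ^ (-s - 1)‖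
        = ‖s‖ * ‖((x + 1 : ℝ) : ℂ) ^ (-s - 1) - ((x : ℝ) : ℂ) ^ (-s - 1)‖ := by
          rw [← mul_sub, norm_mul, norm_neg]
      _ ≤ ‖s‖ * (‖-s - 1‖ * x ^ ((-s - 1).re - 1)) := by
          exact mul_le_mul_of_nonneg_left hdiff (norm_nonneg s)
      _ ≤ (9/2) * ((11/2) * b ^ (-(3/2) : ℝ)) := by
          have hsn1 : ‖-s - 1‖ = ‖s + 1‖ := by rw [show -s - 1 = -(s+1) by ring, norm_neg]
          have hexp : x ^ ((-s - 1).re - 1) ≤ b ^ (-(3/2) : ℝ) := by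
            calc x ^ ((-s - 1).re - 1) ≤ b ^ ((-s - 1).re - 1) :=
                  Real.rpow_le_rpow_of_nonpos (by linarith) hx.1 (by simp; linarith)
              _ ≤ b ^ (-(3/2) : ℝ) := Real.rpow_le_rpow_of_exponent_le hb1 (by simp; linarith)
          have h1 : ‖-s - 1‖ * x ^ ((-s - 1).re - 1) ≤ (11/2) * b ^ (-(3/2) : ℝ) := by
            apply mul_le_mul (by rw [hsn1]; exact hs1n) hexp (Real.rpow_nonneg (by positivity) _)
              (by norm_num)
          apply mul_le_mul hsn h1 (by positivity) (by norm_num)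
      _ = 99/4 * b ^ (-(3/2) : ℝ) := by ring
  have key := Convex.norm_image_sub_le_of_norm_hasDerivWithin_le hderiv hbound
    (convex_Icc _ _) (Set.left_mem_Icc.2 (by linarith)) (Set.right_mem_Icc.2 (by linarith))
  have hval : (fun x : ℝ => ((x + 1 : ℝ) : ℂ) ^ (-s) - ((x : ℝ) : ℂ) ^ (-s)) (b + 1)
      - (fun x : ℝ => ((x + 1 : ℝ) : ℂ) ^ (-s) - ((x : ℝ) : ℂ) ^ (-s)) b
      = ((n+1 : ℕ) : ℂ) ^ (-s) - 2 * ((n+2 : ℕ) : ℂ) ^ (-s) + ((n+3 : ℕ) : ℂ) ^ (-s) := by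
    simp only [hb]
    rw [show (((n : ℝ) + 1 + 1 + 1 : ℝ) : ℂ) = ((n+3 : ℕ) : ℂ) by push_cast; ring,
      show (((n : ℝ) + 1 + 1 : ℝ) : ℂ) = ((n+2 : ℕ) : ℂ) by push_cast; ring,
      show (((n : ℝ) + 1 : ℝ) : ℂ) = ((n+1 : ℕ) : ℂ) by push_cast; ring]
    ring
  rw [hval] at key
  have hn1 : ‖(b + 1) - b‖ = 1 := by norm_num
  rw [hn1, mul_one] at key
  calc ‖F n s‖ = |c (n+1)| * ‖((n+1 : ℕ) : ℂ) ^ (-s) - 2 * ((n+2 : ℕ) : ℂ) ^ (-s)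
        + ((n+3 : ℕ) : ℂ) ^ (-s)‖ := by
        rw [F, norm_mul, Complex.norm_real, Real.norm_eq_abs]
    _ ≤ 1 * (99/4 * b ^ (-(3/2) : ℝ)) :=
        mul_le_mul (c_abs_le _) key (norm_nonneg _) (by norm_num)
    _ ≤ 25 * ((n : ℝ) + 1) ^ (-(3/2) : ℝ) := by
        rw [one_mul, hb]
        have : (0:ℝ) ≤ ((n : ℝ) + 1) ^ (-(3/2) : ℝ) := Real.rpow_nonneg (by positivity) _
        nlinarith

lemma chi_apply (x : ZMod 3) : chiThree x = ((quadraticChar (ZMod 3) x : ℤ) : ℂ) := rfl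

lemma chi_ne_one : chiThree ≠ 1 := by
  intro h
  have h2 : chiThree 2 = 1 := by
    rw [h]
    exact MulChar.one_apply (by decide : IsUnit (2 : ZMod 3))
  rw [chi_apply, show quadraticChar (ZMod 3) 2 = -1 from by decide] at h2
  norm_num at h2

lemma chi_abs_le (x : ZMod 3) : ‖chiThree x‖ ≤ 1 := by
  have h : quadraticChar (ZMod 3) x = 0 ∨ quadraticChar (ZMod 3) x = 1 ∨
      quadraticChar (ZMod 3) x = -1 := by revert x; decide
  rw [chi_apply]
  rcases h with h | h | h <;> rw [h] <;> norm_num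

lemma c_mod0 {n : ℕ} (h : n % 3 = 0) : c n = 0 := by simp [c, h]
lemma c_mod1 {n : ℕ} (h : n % 3 = 1) : c n = 2/3 := by simp [c, h]
lemma c_mod2 {n : ℕ} (h : n % 3 = 2) : c n = 1/3 := by simp [c, h]

lemma chi_val (m : ℕ) :
    chiThree ((m+1 : ℕ) : ZMod 3) = ((c (m+1) - 2 * c m + c (m+2) : ℝ) : ℂ) := by
  obtain ⟨k, hk⟩ : ∃ k, m = 3 * k ∨ m = 3 * k + 1 ∨ m = 3 * k + 2 := ⟨m / 3, by omega⟩
  have hcast : ∀ j : ℕ, ((3 * k + j : ℕ) : ZMod 3) = (j : ZMod 3) := by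
    intro j
    push_cast
    rw [show (3 : ZMod 3) = 0 by decide]
    ring
  rcases hk with rfl | rfl | rfl
  · have e1 : c (3 * k + 1) = 2/3 := c_mod1 (by omega)
    have e0 : c (3 * k) = 0 := c_mod0 (by omega)
    have e2 : c (3 * k + 2) = 1/3 := c_mod2 (by omega)
    rw [hcast 1, e1, e0, e2, show ((1 : ℕ) : ZMod 3) = 1 by norm_num, map_one]
    norm_num
  · have e1 : c (3 * k + 1 + 1) = 1/3 := c_mod2 (by omega)
    have e0 : c (3 * k + 1) = 2/3 := c_mod1 (by omega)
    have e2 : c (3 * k + 1 + 2) = 0 := c_mod0 (by omega)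
    rw [show 3*k+1+1 = 3*k+2 from rfl, hcast 2, e1, e0, e2, chi_apply,
      show quadraticChar (ZMod 3) ((2 : ℕ) : ZMod 3) = -1 from by decide]
    norm_num
  · have e1 : c (3 * k + 2 + 1) = 0 := c_mod0 (by omega)
    have e0 : c (3 * k + 2) = 1/3 := c_mod2 (by omega)
    have e2 : c (3 * k + 2 + 2) = 2/3 := c_mod1 (by omega)
    rw [show 3*k+2+1 = 3*k+3 from rfl, hcast 3, e1, e0, e2, chi_apply,
      show quadraticChar (ZMod 3) ((3 : ℕ) : ZMod 3) = 0 from by decide]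
    norm_num

lemma summable_aux {σ : ℝ} (hσ : 1 < σ) : Summable (fun m : ℕ => ((m : ℝ) + 1) ^ (-σ)) := by
  have h0 := Real.summable_nat_rpow (p := -σ) |>.2 (by linarith)
  have h := (summable_nat_add_iff 1).2 h0
  refine h.congr fun m => ?_
  push_cast
  ring_nf

lemma summable_e {s : ℂ} (hs : 1 < s.re) (g : ℕ → ℝ) (hg : ∀ m, |g m| ≤ 1) :
    Summable (fun m : ℕ => (g m : ℂ) * ((m+1 : ℕ) : ℂ) ^ (-s)) := by
  apply Summable.of_norm
  apply Summable.of_nonneg_of_le (fun m => norm_nonneg _) (fun m => ?_) (summable_aux hs)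
  rw [norm_mul, Complex.norm_real, Real.norm_eq_abs]
  have he : ‖((m+1 : ℕ) : ℂ) ^ (-s)‖ = ((m : ℝ) + 1) ^ (-s.re) := by
    rw [show ((m+1 : ℕ) : ℂ) = (((m : ℝ) + 1 : ℝ) : ℂ) by push_cast; ring,
      Complex.norm_cpow_eq_rpow_re_of_pos (by positivity), Complex.neg_re]
  rw [he]
  calc |g m| * ((m : ℝ) + 1) ^ (-s.re) ≤ 1 * ((m : ℝ) + 1) ^ (-s.re) :=
        mul_le_mul_of_nonneg_right (hg m) (Real.rpow_nonneg (by positivity) _)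
    _ = _ := one_mul _

/-- Shorthand for `(m+1) ^ (-s)`. -/
noncomputable def e (s : ℂ) (m : ℕ) : ℂ := ((m+1 : ℕ) : ℂ) ^ (-s)

set_option maxHeartbeats 2000000 in
lemma key {s : ℂ} (hs : 1 < s.re) :
    chiThree.LFunction s = 1/3 + ∑' n, F n s := by
  have h1 : Summable fun n => (c (n+1) : ℂ) * e s n :=
    summable_e hs (fun n => c (n+1)) (fun m => c_abs_le _)
  have h0 : Summable fun n => (c n : ℂ) * e s n :=
    summable_e hs (fun n => c n) (fun m => c_abs_le _)
  have h2 : Summable fun n => (c (n+2) : ℂ) * e s n :=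
    summable_e hs (fun n => c (n+2)) (fun m => c_abs_le _)
  have hshift1 : ∑' n, (c (n+1) : ℂ) * e s (n+1) = ∑' n, (c n : ℂ) * e s n := by
    rw [Summable.tsum_eq_zero_add h0, c_zero]
    simp
  have h2s : Summable fun n => (c (n+1+2) : ℂ) * e s (n+1) := (summable_nat_add_iff 1).mpr h2
  have hshift2 : ∑' n, (c (n+1) : ℂ) * e s (n+2) = ∑' n, (c (n+2) : ℂ) * e s n - 1/3 := by
    have step1 : ∑' n, (c (n+2) : ℂ) * e s n
        = (c 2 : ℂ) * e s 0 + ∑' n, (c (n+1+2) : ℂ) * e s (n+1) := Summable.tsum_eq_zero_add h2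
    have step2 : ∑' n, (c (n+1+2) : ℂ) * e s (n+1)
        = (c (0+1+2) : ℂ) * e s (0+1) + ∑' n, (c (n+1+1+2) : ℂ) * e s (n+1+1) :=
      Summable.tsum_eq_zero_add h2s
    have hcongr : ∑' n, (c (n+1+1+2) : ℂ) * e s (n+1+1) = ∑' n, (c (n+1) : ℂ) * e s (n+2) := by
      apply tsum_congr
      intro n
      rw [show n+1+1+2 = (n+1)+3 from rfl, c_period (n+1)]
    have hc2 : c 2 = 1/3 := c_mod2 rfl
    have hc3 : c (0+1+2) = 0 := c_mod0 rfl
    have he0 : e s 0 = 1 := by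
      rw [e, Nat.cast_one, one_cpow]
    rw [step2, hcongr] at step1
    rw [step1, hc2, hc3, he0]
    push_cast
    ring
  have sB : Summable fun n => (c (n+1) : ℂ) * e s (n+1) := (summable_nat_add_iff 1).mpr h0
  have sC : Summable fun n => (c (n+1) : ℂ) * e s (n+2) := by
    refine ((summable_nat_add_iff 2).mpr h2).congr fun n => ?_
    rw [show n+2+2 = (n+1)+3 from rfl, c_period (n+1)]
  have hF : ∀ n, F n s = (c (n+1) : ℂ) * e s n - 2 * ((c (n+1) : ℂ) * e s (n+1))
      + (c (n+1) : ℂ) * e s (n+2) := by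
    intro n
    simp only [F, e]
    push_cast
    ring_nf
  have hLS : LSeriesSummable (fun n : ℕ => chiThree n) s :=
    LSeriesSummable_of_bounded_of_one_lt_re (fun n _ => chi_abs_le _) hs
  have hL : LSeries (fun n : ℕ => chiThree n) s = ∑' n, chiThree ((n+1 : ℕ) : ZMod 3) * e s n := by
    rw [LSeries, Summable.tsum_eq_zero_add hLS, LSeries.term_zero, zero_add]
    apply tsum_congr
    intro n
    rw [LSeries.term_of_ne_zero (Nat.succ_ne_zero n), e, cpow_neg, div_eq_mul_inv]
  have hw : ∀ n : ℕ, chiThree ((n+1 : ℕ) : ZMod 3) * e s n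
      = (c (n+1) : ℂ) * e s n - 2 * ((c n : ℂ) * e s n) + (c (n+2) : ℂ) * e s n := by
    intro n
    rw [chi_val]
    push_cast
    ring
  rw [DirichletCharacter.LFunction_eq_LSeries _ hs, hL, tsum_congr hw,
    Summable.tsum_add (h1.sub ((h0.mul_left 2))) h2, Summable.tsum_sub h1 (h0.mul_left 2), tsum_mul_left,
    tsum_congr hF, Summable.tsum_add (h1.sub (sB.mul_left 2)) sC, Summable.tsum_sub h1 (sB.mul_left 2),
    tsum_mul_left, hshift1, hshift2]
  ring

/-- The terms of the limit series, grouped in threes. -/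
noncomputable def t (k : ℕ) : ℝ :=
  Real.log ((k : ℝ) + 2/3) - 2/3 * Real.log ((k : ℝ) + 1/3) - 1/3 * Real.log ((k : ℝ) + 4/3)

lemma r_triple (m : ℕ) : r (3*m) + r (3*m+1) + r (3*m+1+1) = t m := by
  have hc1 : c (3*m+1) = 2/3 := c_mod1 (by omega)
  have hc2 : c (3*m+1+1) = 1/3 := c_mod2 (by omega)
  have hc3 : c (3*m+1+1+1) = 0 := c_mod0 (by omega)
  simp only [r, t, hc1, hc2, hc3]
  rw [show ((3*m : ℕ) : ℝ) + 1 = 3*(m:ℝ)+1 by push_cast; ring,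
      show ((3*m : ℕ) : ℝ) + 2 = 3*(m:ℝ)+2 by push_cast; ring,
      show ((3*m : ℕ) : ℝ) + 3 = 3*(m:ℝ)+3 by push_cast; ring,
      show ((3*m+1 : ℕ) : ℝ) + 1 = 3*(m:ℝ)+2 by push_cast; ring,
      show ((3*m+1 : ℕ) : ℝ) + 2 = 3*(m:ℝ)+3 by push_cast; ring,
      show ((3*m+1 : ℕ) : ℝ) + 3 = 3*(m:ℝ)+4 by push_cast; ring,
      show ((3*m+1+1 : ℕ) : ℝ) + 1 = 3*(m:ℝ)+3 by push_cast; ring,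
      show ((3*m+1+1 : ℕ) : ℝ) + 2 = 3*(m:ℝ)+4 by push_cast; ring,
      show ((3*m+1+1 : ℕ) : ℝ) + 3 = 3*(m:ℝ)+5 by push_cast; ring,
      show 3*(m:ℝ)+1 = 3*((m:ℝ)+1/3) by ring,
      show 3*(m:ℝ)+2 = 3*((m:ℝ)+2/3) by ring,
      show 3*(m:ℝ)+4 = 3*((m:ℝ)+4/3) by ring,
      Real.log_mul (by norm_num) (by positivity),
      Real.log_mul (by norm_num) (by positivity),
      Real.log_mul (by norm_num) (by positivity)]
  ring

lemma sum_r_eq (m : ℕ) :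
    ∑ n ∈ Finset.range (3*m), r n = ∑ k ∈ Finset.range m, t k := by
  induction m with
  | zero => simp
  | succ m ih =>
      rw [Finset.sum_range_succ, ← ih, ← r_triple m, show 3*(m+1) = (3*m+1+1)+1 by ring,
        Finset.sum_range_succ, Finset.sum_range_succ, Finset.sum_range_succ]
      ring

lemma log_GammaSeq (x : ℝ) (hx : 0 < x) {n : ℕ} (hn : 1 ≤ n) :
    Real.log (Real.GammaSeq x n)
      = x * Real.log n + Real.log (n.factorial : ℝ)
        - ∑ j ∈ Finset.range (n+1), Real.log (x + j) := by
  have hn' : (0:ℝ) < (n : ℝ) := by exact_mod_cast hn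
  have hfact : (0:ℝ) < (n.factorial : ℝ) := by exact_mod_cast n.factorial_pos
  have hprod : ∀ j ∈ Finset.range (n+1), x + (j : ℝ) ≠ 0 := fun j _ => by positivity
  rw [Real.GammaSeq, Real.log_div (by positivity) (Finset.prod_ne_zero_iff.mpr hprod),
    Real.log_mul (by positivity) (ne_of_gt hfact), Real.log_rpow hn',
    Real.log_prod hprod]

lemma sum_t_eq {n : ℕ} (hn : 1 ≤ n) :
    ∑ k ∈ Finset.range (n+1), t k
      = 2/3 * Real.log (Real.GammaSeq (1/3) n) + 1/3 * Real.log (Real.GammaSeq (4/3) n)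
        - Real.log (Real.GammaSeq (2/3) n) := by
  rw [log_GammaSeq (1/3) (by norm_num) hn, log_GammaSeq (4/3) (by norm_num) hn,
    log_GammaSeq (2/3) (by norm_num) hn]
  simp only [t]
  rw [Finset.sum_sub_distrib, Finset.sum_sub_distrib, ← Finset.mul_sum, ← Finset.mul_sum]
  rw [show ∑ j ∈ Finset.range (n+1), Real.log ((1:ℝ)/3 + j)
        = ∑ j ∈ Finset.range (n+1), Real.log ((j:ℝ) + 1/3) from
      Finset.sum_congr rfl (fun j _ => by rw [add_comm]),
    show ∑ j ∈ Finset.range (n+1), Real.log ((2:ℝ)/3 + j)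
        = ∑ j ∈ Finset.range (n+1), Real.log ((j:ℝ) + 2/3) from
      Finset.sum_congr rfl (fun j _ => by rw [add_comm]),
    show ∑ j ∈ Finset.range (n+1), Real.log ((4:ℝ)/3 + j)
        = ∑ j ∈ Finset.range (n+1), Real.log ((j:ℝ) + 4/3) from
      Finset.sum_congr rfl (fun j _ => by rw [add_comm])]
  ring

lemma tendsto_sum_t :
    Filter.Tendsto (fun n : ℕ => ∑ k ∈ Finset.range (n+1), t k) Filter.atTop
      (nhds (Real.log (Real.Gamma (1/3) / ((3:ℝ) ^ ((1:ℝ)/3) * Real.Gamma (2/3))))) := by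
  have hG1 : (0:ℝ) < Real.Gamma (1/3) := Real.Gamma_pos_of_pos (by norm_num)
  have hG4 : (0:ℝ) < Real.Gamma (4/3) := Real.Gamma_pos_of_pos (by norm_num)
  have hG2 : (0:ℝ) < Real.Gamma (2/3) := Real.Gamma_pos_of_pos (by norm_num)
  have h1 := (Real.GammaSeq_tendsto_Gamma (1/3)).log (ne_of_gt hG1)
  have h4 := (Real.GammaSeq_tendsto_Gamma (4/3)).log (ne_of_gt hG4)
  have h2 := (Real.GammaSeq_tendsto_Gamma (2/3)).log (ne_of_gt hG2)
  have hcomb := ((h1.const_mul (2/3 : ℝ)).add (h4.const_mul (1/3 : ℝ))).sub h2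
  have hval : 2/3 * Real.log (Real.Gamma (1/3)) + 1/3 * Real.log (Real.Gamma (4/3))
      - Real.log (Real.Gamma (2/3))
      = Real.log (Real.Gamma (1/3) / ((3:ℝ) ^ ((1:ℝ)/3) * Real.Gamma (2/3))) := by
    have hG : Real.Gamma (4/3) = 1/3 * Real.Gamma (1/3) := by
      rw [show (4:ℝ)/3 = 1/3 + 1 by norm_num, Real.Gamma_add_one (by norm_num)]
    rw [hG, Real.log_mul (by norm_num) (ne_of_gt hG1),
      Real.log_div (ne_of_gt hG1) (by positivity),
      Real.log_mul (by positivity) (ne_of_gt hG2),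
      Real.log_rpow (by norm_num),
      show Real.log (1/3) = -Real.log 3 by rw [one_div, Real.log_inv]]
    ring
  rw [← hval]
  apply Filter.Tendsto.congr' _ hcomb
  filter_upwards [Filter.eventually_ge_atTop 1] with n hn
  exact (sum_t_eq hn).symm

end ChiThreeAux

open ChiThreeAux

/-- `L(χ₃, 0) = 1/3` and `L'(χ₃, 0) = log (Γ(1/3) / (3^{1/3} Γ(2/3)))`. -/
theorem LFunction_chiThree_zero_and_deriv :
    chiThree.LFunction 0 = 1 / 3 ∧
    deriv chiThree.LFunction 0
      = Real.log (Real.Gamma (1 / 3) / ((3 : ℝ) ^ ((1 : ℝ) / 3) * Real.Gamma (2 / 3))) := by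
  have hUo : IsOpen (Metric.ball (2:ℂ) (5/2)) := Metric.isOpen_ball
  have h0U : (0:ℂ) ∈ Metric.ball (2:ℂ) (5/2) := by
    rw [Metric.mem_ball, dist_eq_norm, zero_sub, norm_neg]
    norm_num
  have hu : Summable (fun n : ℕ => 25 * ((n:ℝ)+1) ^ (-(3/2) : ℝ)) :=
    (summable_aux (by norm_num : (1:ℝ) < 3/2)).mul_left 25
  have hFd : ∀ n : ℕ, DifferentiableOn ℂ (F n) (Metric.ball (2:ℂ) (5/2)) :=
    fun n => (F_differentiable n).differentiableOn
  have hb : ∀ (n : ℕ) (w : ℂ), w ∈ Metric.ball (2:ℂ) (5/2) →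
      ‖F n w‖ ≤ 25 * ((n:ℝ)+1) ^ (-(3/2) : ℝ) := fun n w hw => F_bound n hw
  have Hdiff : DifferentiableOn ℂ (fun w : ℂ => ∑' n, F n w) (Metric.ball (2:ℂ) (5/2)) :=
    differentiableOn_tsum_of_summable_norm hu hFd hUo hb
  have heq : Set.EqOn chiThree.LFunction (fun z : ℂ => 1/3 + ∑' n, F n z)
      (Metric.ball (2:ℂ) (5/2)) := by
    have hmem : {z : ℂ | 1 < z.re} ∈ nhds (2:ℂ) :=
      (isOpen_lt continuous_const Complex.continuous_re).mem_nhds (by norm_num)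
    exact AnalyticOnNhd.eqOn_of_preconnected_of_eventuallyEq
      (((DirichletCharacter.differentiable_LFunction chi_ne_one).differentiableOn).analyticOnNhd
        hUo)
      ((Hdiff.const_add (1/3 : ℂ)).analyticOnNhd hUo)
      ((convex_ball _ _).isPreconnected)
      (by rw [Metric.mem_ball]; norm_num : (2:ℂ) ∈ Metric.ball (2:ℂ) (5/2))
      (Filter.eventuallyEq_of_mem hmem (fun z hz => key hz))
  have hL0 : chiThree.LFunction 0 = 1 / 3 := by
    have h := heq h0U
    simp only at h
    rw [h, tsum_congr (fun n => F_zero n), tsum_zero, add_zero]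
  refine ⟨hL0, ?_⟩
  have hdeq : deriv chiThree.LFunction 0 = deriv (fun z : ℂ => 1/3 + ∑' n, F n z) 0 :=
    Filter.EventuallyEq.deriv_eq (heq.eventuallyEq_of_mem (hUo.mem_nhds h0U))
  have hHS : HasSum (fun n => deriv (F n) 0) (deriv (fun w : ℂ => ∑' n, F n w) 0) :=
    hasSum_deriv_of_summable_norm hu hFd hUo hb h0U
  have hHS' : HasSum (fun n => ((r n : ℝ) : ℂ)) (deriv (fun w : ℂ => ∑' n, F n w) 0) :=
    (funext F_deriv : (fun n => deriv (F n) 0) = fun n => ((r n : ℝ) : ℂ)) ▸ hHS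
  have hsumr : Summable r := Complex.summable_ofReal.1 hHS'.summable
  have hmono : Filter.Tendsto (fun m : ℕ => 3 * (m+1)) Filter.atTop Filter.atTop :=
    Filter.tendsto_atTop_atTop_of_monotone (fun a b h => by omega) (fun b => ⟨b, by omega⟩)
  have hlim2 : Filter.Tendsto (fun m : ℕ => ∑ n ∈ Finset.range (3*(m+1)), r n)
      Filter.atTop (nhds (∑' n, r n)) := hsumr.hasSum.tendsto_sum_nat.comp hmono
  have hlim3 : Filter.Tendsto (fun m : ℕ => ∑ n ∈ Finset.range (3*(m+1)), r n)
      Filter.atTop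
      (nhds (Real.log (Real.Gamma (1/3) / ((3:ℝ) ^ ((1:ℝ)/3) * Real.Gamma (2/3))))) :=
    tendsto_sum_t.congr fun m => (sum_r_eq (m+1)).symm
  have hE : ∑' n, r n
      = Real.log (Real.Gamma (1/3) / ((3:ℝ) ^ ((1:ℝ)/3) * Real.Gamma (2/3))) :=
    tendsto_nhds_unique hlim2 hlim3
  have hfin : deriv (fun w : ℂ => ∑' n, F n w) 0
      = ((Real.log (Real.Gamma (1/3) / ((3:ℝ) ^ ((1:ℝ)/3) * Real.Gamma (2/3))) : ℝ) : ℂ) :=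
    hHS'.unique (Complex.hasSum_ofReal.2 (hE ▸ hsumr.hasSum))
  rw [hdeq, deriv_const_add, hfin]
end
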